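/- arXiv:1503.02999 — 4 statements merged into one kernel-verified Lean document; each statement's English description precedes it below -/
import Mathlib

section
/- Let κ > 0, define T_κ : ℝ² → ℝ² by T_κ y = |y|^{κ−1} y for y ≠ 0 and T_κ 0 = 0, let ψ : ℝ² → ℝ be differentiable at a point y ≠ 0, and set φ = ψ ∘ T_κ^{-1} and x = T_κ y. Then min{1, κ²} |∇φ(x)|² ≤ |∇ψ(y)|² |y|^{2 − 2κ} ≤ max{1, κ²} |∇φ(x)|². -/
/-!
Since `T_{1/κ} ∘ T_κ = id`, we have `ψ = φ ∘ T_κ`, and `φ` is differentiable at `x ≠ 0` because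
`T_{1/κ}` is smooth away from the origin. The differential of `T_κ` at `y` is
`|y|^{κ-1} (I + (κ - 1) ŷ ŷᵀ)` with `ŷ = y / |y|`, which is self-adjoint, so the chain rule gives
`∇ψ(y) = |y|^{κ-1} (∇φ(x) + (κ - 1) ⟪ŷ, ∇φ(x)⟫ ŷ)`. The bracket is the image of `∇φ(x)` under a
symmetric map with eigenvalues `1` and `κ`, whence the two-sided bound.
-/

noncomputable abbrev E2 : Type := EuclideanSpace ℝ (Fin 2)

/-- The transformation T_κ y = |y|^{κ-1} y (with T_κ 0 = 0). -/
noncomputable def Tk (κ : ℝ) (y : E2) : E2 := ‖y‖ ^ (κ - 1) • y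

open scoped RealInnerProductSpace

section RadialPower

variable {E : Type*} [NormedAddCommGroup E] [InnerProductSpace ℝ E]

theorem hasFDerivAt_norm_rpow_smul_self (p : ℝ) {x : E} (hx : x ≠ 0) :
    HasFDerivAt (fun z : E => ‖z‖ ^ p • z)
      (‖x‖ ^ p • (ContinuousLinearMap.id ℝ E +
        (innerSL ℝ x).smulRight ((p / ‖x‖ ^ 2) • x))) x := by
  have hx2 : ‖x‖ ^ 2 ≠ 0 := by positivity
  have hpow : ∀ z : E, (‖z‖ ^ 2) ^ (p / 2) = ‖z‖ ^ p := fun z => by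
    rw [← Real.rpow_natCast, ← Real.rpow_mul (norm_nonneg z)]
    ring_nf
  have h := ((hasFDerivAt_id x).norm_sq.rpow_const (p := p / 2) (Or.inl hx2)).smul
    (hasFDerivAt_id x)
  simp only [hpow, id] at h
  refine h.congr_fderiv (ContinuousLinearMap.ext fun h => ?_)
  simp only [add_apply, smul_apply, ContinuousLinearMap.id_apply,
    ContinuousLinearMap.smulRight_apply, innerSL_apply_apply, ContinuousLinearMap.comp_apply]
  rw [Real.rpow_sub_one hx2, hpow]
  module

/-- The differential of `z ↦ ‖z‖ ^ p • z` is self-adjoint, so it transports gradients. -/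
theorem HasGradientAt.comp_norm_rpow_smul_self [CompleteSpace E] {f : E → ℝ} {g : E} (p : ℝ) {x : E}
    (hf : HasGradientAt f g (‖x‖ ^ p • x)) (hx : x ≠ 0) :
    HasGradientAt (fun z => f (‖z‖ ^ p • z))
      (‖x‖ ^ p • (g + (p * ⟪x, g⟫ / ‖x‖ ^ 2) • x)) x := by
  rw [hasGradientAt_iff_hasFDerivAt] at hf ⊢
  refine (hf.comp (f := fun z : E => ‖z‖ ^ p • z) x
    (hasFDerivAt_norm_rpow_smul_self p hx)).congr_fderiv
    (ContinuousLinearMap.ext fun h => ?_)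
  simp only [ContinuousLinearMap.comp_apply, InnerProductSpace.toDual_apply_apply,
    smul_apply, add_apply, ContinuousLinearMap.id_apply, ContinuousLinearMap.smulRight_apply,
    innerSL_apply_apply, inner_add_left, inner_add_right, real_inner_smul_left,
    real_inner_smul_right, real_inner_comm x g]
  ring

theorem norm_add_smul_inner_smul_sq (s : ℝ) {x : E} (hx : x ≠ 0) (w : E) :
    ‖w + ((s - 1) * ⟪x, w⟫ / ‖x‖ ^ 2) • x‖ ^ 2 =
      ‖w‖ ^ 2 + (s ^ 2 - 1) * (⟪x, w⟫ ^ 2 / ‖x‖ ^ 2) := by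
  have hx2 : ‖x‖ ^ 2 ≠ 0 := by positivity
  rw [norm_add_sq_real, norm_smul, real_inner_smul_right, mul_pow, Real.norm_eq_abs, sq_abs,
    real_inner_comm]
  field_simp
  ring

/-- With `u = x / ‖x‖` the map is `w ↦ w + (s - 1) ⟪u, w⟫ u`, whose singular values are `1`
and `|s|`. -/
theorem norm_add_smul_inner_smul_sq_mem_Icc (s : ℝ) {x : E} (hx : x ≠ 0) (w : E) :
    ‖w + ((s - 1) * ⟪x, w⟫ / ‖x‖ ^ 2) • x‖ ^ 2 ∈
      Set.Icc (min 1 (s ^ 2) * ‖w‖ ^ 2) (max 1 (s ^ 2) * ‖w‖ ^ 2) := by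
  rw [norm_add_smul_inner_smul_sq s hx]
  have hc : ⟪x, w⟫ ^ 2 / ‖x‖ ^ 2 ≤ ‖w‖ ^ 2 := by
    rw [div_le_iff₀ (by positivity), ← mul_pow, ← sq_abs, mul_comm]
    exact pow_le_pow_left₀ (abs_nonneg _) (abs_real_inner_le_norm x w) 2
  have hc0 : 0 ≤ ⟪x, w⟫ ^ 2 / ‖x‖ ^ 2 := by positivity
  rcases le_total (s ^ 2) 1 with hs | hs
  · rw [min_eq_right hs, max_eq_left hs]
    constructor <;> nlinarith
  · rw [min_eq_left hs, max_eq_right hs]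
    constructor <;> nlinarith

end RadialPower

theorem Tk_one_div_Tk {κ : ℝ} (hκ : κ ≠ 0) (y : E2) : Tk (1 / κ) (Tk κ y) = y := by
  rcases eq_or_ne y 0 with rfl | hy
  · simp [Tk]
  have hr : 0 < ‖y‖ := norm_pos_iff.2 hy
  rw [Tk, Tk, smul_smul, norm_smul, Real.norm_of_nonneg (by positivity),
    ← Real.rpow_add_one hr.ne', ← Real.rpow_mul hr.le, ← Real.rpow_add hr]
  convert one_smul ℝ y
  convert Real.rpow_zero ‖y‖
  field_simp
  ring

theorem Tk_gradient_estimate (κ : ℝ) (hκ : 0 < κ)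
    (ψ : E2 → ℝ) (φ : E2 → ℝ) (hφ : φ = ψ ∘ Tk (1 / κ))
    (y : E2) (hy : y ≠ 0) (hψ : DifferentiableAt ℝ ψ y)
    (x : E2) (hx : x = Tk κ y) :
    min 1 (κ ^ 2) * ‖gradient φ x‖ ^ 2 ≤ ‖gradient ψ y‖ ^ 2 * ‖y‖ ^ (2 - 2 * κ) ∧
    ‖gradient ψ y‖ ^ 2 * ‖y‖ ^ (2 - 2 * κ) ≤ max 1 (κ ^ 2) * ‖gradient φ x‖ ^ 2 := by
  have hyx : Tk (1 / κ) x = y := hx ▸ Tk_one_div_Tk hκ.ne' y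
  have hx0 : x ≠ 0 := by
    rintro rfl
    exact hy (by simpa [Tk] using hyx.symm)
  have hφx : DifferentiableAt ℝ φ x :=
    hφ ▸ (hyx ▸ hψ).comp x (hasFDerivAt_norm_rpow_smul_self _ hx0).differentiableAt
  have hψφ : ψ = fun z => φ (‖z‖ ^ (κ - 1) • z) := by
    funext z
    rw [hφ]
    exact congrArg ψ (Tk_one_div_Tk hκ.ne' z).symm
  set w := gradient φ x
  have hφw : HasGradientAt φ w (Tk κ y) := hx ▸ hφx.hasGradientAt
  have hgrad : gradient ψ y = ‖y‖ ^ (κ - 1) • (w + ((κ - 1) * ⟪y, w⟫ / ‖y‖ ^ 2) • y) := by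
    rw [hψφ]
    exact (hφw.comp_norm_rpow_smul_self _ hy).gradient
  have hscale : (‖y‖ ^ (κ - 1)) ^ 2 * ‖y‖ ^ (2 - 2 * κ) = 1 := by
    rw [← Real.rpow_natCast, ← Real.rpow_mul (norm_nonneg y), ← Real.rpow_add (norm_pos_iff.2 hy)]
    convert Real.rpow_zero ‖y‖ using 2
    push_cast
    ring
  rw [hgrad, norm_smul, Real.norm_of_nonneg (by positivity), mul_pow, mul_right_comm, hscale,
    one_mul]
  exact norm_add_smul_inner_smul_sq_mem_Icc κ hy w
end

section
/- Let κ > 0, define T_κ : ℝ² → ℝ² by T_κ y = |y|^{κ−1} y for y ≠ 0 and T_κ 0 = 0, let ψ : ℝ² → ℝ be radial and differentiable at a point y ≠ 0, and set φ = ψ ∘ T_κ^{-1} and x = T_κ y. Then κ² |∇φ(x)|² = |∇ψ(y)|² |y|^{2 − 2κ}. -/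
section Radial

variable {E : Type*} [NormedAddCommGroup E] [InnerProductSpace ℝ E]

theorem hasFDerivAt_norm {y : E} (hy : y ≠ 0) :
    HasFDerivAt (‖·‖) (‖y‖⁻¹ • innerSL ℝ y) y := by
  have hsq : ‖y‖ ^ 2 ≠ 0 := by positivity
  have h := (Real.hasDerivAt_sqrt hsq).comp_hasFDerivAt y (hasStrictFDerivAt_norm_sq y).hasFDerivAt
  simp only [Function.comp_def, Real.sqrt_sq (norm_nonneg _)] at h
  refine h.congr_fderiv (ContinuousLinearMap.ext fun v => ?_)
  simp only [smul_apply, innerSL_apply_apply, nsmul_eq_mul, Nat.cast_ofNat, smul_eq_mul]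
  field_simp

theorem HasDerivAt.hasGradientAt_comp_norm [CompleteSpace E] {f : ℝ → ℝ} {f' : ℝ} {y : E}
    (hf : HasDerivAt f f' ‖y‖) (hy : y ≠ 0) :
    HasGradientAt (fun z => f ‖z‖) ((f' / ‖y‖) • y) y := by
  rw [hasGradientAt_iff_hasFDerivAt]
  refine (hf.comp_hasFDerivAt y (hasFDerivAt_norm hy)).congr_fderiv
    (ContinuousLinearMap.ext fun v => ?_)
  simp [div_eq_inv_mul]
  ring

theorem HasDerivAt.norm_gradient_comp_norm [CompleteSpace E] {f : ℝ → ℝ} {f' : ℝ} {y : E}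
    (hf : HasDerivAt f f' ‖y‖) (hy : y ≠ 0) :
    ‖gradient (fun z => f ‖z‖) y‖ = |f'| := by
  rw [(hf.hasGradientAt_comp_norm hy).gradient, norm_smul, Real.norm_eq_abs, abs_div, abs_norm,
    div_mul_cancel₀ _ (norm_ne_zero_iff.mpr hy)]

theorem eq_comp_norm_of_radial {ψ : E → ℝ} (hψ : ∀ y y' : E, ‖y‖ = ‖y'‖ → ψ y = ψ y')
    {u : E} (hu : ‖u‖ = 1) :
    ψ = fun z => ψ (‖z‖ • u) :=
  funext fun z => hψ _ _ (by rw [norm_smul, hu, mul_one, norm_norm])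

end Radial

theorem norm_Tk {μ : ℝ} (hμ : μ ≠ 0) (z : E2) : ‖Tk μ z‖ = ‖z‖ ^ μ := by
  rcases eq_or_ne z 0 with rfl | hz
  · simp [Tk, Real.zero_rpow hμ]
  · rw [Tk, norm_smul, Real.norm_of_nonneg (by positivity), ← Real.rpow_add_one (by positivity),
      sub_add_cancel]

theorem Tk_gradient_identity_radial (κ : ℝ) (hκ : 0 < κ)
    (ψ : E2 → ℝ) (hψ_rad : ∀ y y' : E2, ‖y‖ = ‖y'‖ → ψ y = ψ y')
    (φ : E2 → ℝ) (hφ : φ = ψ ∘ Tk (1 / κ))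
    (y : E2) (hy : y ≠ 0) (hψ : DifferentiableAt ℝ ψ y)
    (x : E2) (hx : x = Tk κ y) :
    κ ^ 2 * ‖gradient φ x‖ ^ 2 = ‖gradient ψ y‖ ^ 2 * ‖y‖ ^ (2 - 2 * κ) := by
  have hyn : 0 < ‖y‖ := norm_pos_iff.mpr hy
  set f : ℝ → ℝ := fun r => ψ (r • ‖y‖⁻¹ • y)
  have hψf : ψ = fun z => f ‖z‖ := eq_comp_norm_of_radial hψ_rad (norm_smul_inv_norm hy)
  obtain ⟨f', hf⟩ : ∃ f', HasDerivAt f f' ‖y‖ := by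
    have hψ' : DifferentiableAt ℝ ψ (‖y‖ • ‖y‖⁻¹ • y) := by rwa [smul_inv_smul₀ hyn.ne']
    exact ⟨_, (hψ'.comp ‖y‖ (differentiableAt_id.smul_const _)).hasDerivAt⟩
  have hxn : ‖x‖ = ‖y‖ ^ κ := hx ▸ norm_Tk hκ.ne' y
  have hx0 : x ≠ 0 := norm_pos_iff.mp (hxn ▸ by positivity)
  set g : ℝ → ℝ := fun s => f (s ^ (1 / κ))
  have hφg : φ = fun z => g ‖z‖ := by
    rw [hφ, hψf]
    funext z
    simp only [Function.comp_apply, norm_Tk (one_div_ne_zero hκ.ne'), g]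
  have hxy : ‖x‖ ^ (1 / κ) = ‖y‖ := by
    rw [hxn, ← Real.rpow_mul hyn.le, mul_one_div_cancel hκ.ne', Real.rpow_one]
  have hg : HasDerivAt g (f' * (1 / κ * ‖x‖ ^ (1 / κ - 1))) ‖x‖ := by
    rw [← hxy] at hf
    exact hf.comp ‖x‖ (Real.hasDerivAt_rpow_const (Or.inl (norm_ne_zero_iff.mpr hx0)))
  have hpow : ‖x‖ ^ (1 / κ - 1) = ‖y‖ ^ (1 - κ) := by
    rw [hxn, ← Real.rpow_mul hyn.le]
    congr 1
    field_simp
  rw [hφg, hg.norm_gradient_comp_norm hx0, hψf, hf.norm_gradient_comp_norm hy, hpow,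
    show 2 - 2 * κ = (1 - κ) * (2 : ℕ) by push_cast; ring, Real.rpow_mul_natCast hyn.le,
    sq_abs, sq_abs]
  field_simp
end

section
/- Let Ω ⊂ ℝ² be either an open ball {x : |x| < R} (R > 0) or an open annulus {x : a < |x| < b} (0 < a < b) centered at the origin, let κ > 0 and set Ω_κ = T_κ^{-1}(Ω). Let ψ : ℝ² → ℝ be radial and continuously differentiable on Ω_κ \ {0}, and set φ = ψ ∘ T_κ^{-1}. Then, as an identity of Lebesgue integrals with values in [0, ∞]: κ ∫_Ω |∇φ(x)|² dx = ∫_{Ω_κ} |∇ψ(y)|² dy. -/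
open MeasureTheory

/-!
A radial `ψ` is a function `f (‖y‖)` of the norm only, so its gradient at `y` is `f' (‖y‖)`
along `y / ‖y‖`, and `φ = ψ ∘ T_{1/κ}` is `x ↦ f (‖x‖ ^ (1/κ))`, whose gradient has norm
`|f' (‖x‖ ^ (1/κ))| (1/κ) ‖x‖ ^ (1/κ - 1)`. In the plane, `T_β` stretches tangential directions
by `‖x‖ ^ (β - 1)` and the radial one by `β ‖x‖ ^ (β - 1)`, so its Jacobian is
`β ‖x‖ ^ (2 (β - 1))`. Substituting `y = T_{1/κ} x` in `∫_{Ω_κ} ‖∇ψ‖²` therefore gives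
`∫_Ω (1/κ) ‖x‖ ^ (2/κ - 2) |f'|² = κ ∫_Ω ‖∇φ‖²`, up to the null set `{0}`.
-/

open scoped ENNReal

theorem setLIntegral_sdiff_singleton {α : Type*} [MeasurableSpace α] {μ : Measure α}
    [NullSingletonClass μ] (s : Set α) (a : α) (f : α → ℝ≥0∞) :
    ∫⁻ x in s \ {a}, f x ∂μ = ∫⁻ x in s, f x ∂μ :=
  setLIntegral_congr (sdiff_null_ae_eq_self (measure_singleton a))

section RadialCalculus

variable {E : Type*} [NormedAddCommGroup E] [InnerProductSpace ℝ E]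

theorem hasFDerivAt_norm_rpow_of_ne_zero (α : ℝ) {x : E} (hx : x ≠ 0) :
    HasFDerivAt (fun y : E => ‖y‖ ^ α) ((α * ‖x‖ ^ (α - 2)) • innerSL ℝ x) x := by
  have hx' : 0 < ‖x‖ := norm_pos_iff.mpr hx
  have h := ((hasStrictFDerivAt_norm_sq x).hasFDerivAt).rpow_const (p := α / 2)
    (Or.inl (by positivity))
  have hfun : (fun y : E => (‖y‖ ^ 2) ^ (α / 2)) = fun y => ‖y‖ ^ α := by
    funext y
    rw [← Real.rpow_natCast, ← Real.rpow_mul (norm_nonneg y)]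
    ring_nf
  rw [hfun] at h
  have hpow : (‖x‖ ^ 2) ^ (α / 2 - 1) = ‖x‖ ^ (α - 2) := by
    rw [← Real.rpow_natCast, ← Real.rpow_mul hx'.le]
    ring_nf
  rw [hpow] at h
  convert h using 1
  ext v
  simp only [smul_apply, coe_innerSL_apply, smul_eq_mul,
    nsmul_eq_mul, Nat.cast_ofNat]
  ring

variable [CompleteSpace E]

theorem hasGradientAt_comp_norm_rpow {f : ℝ → ℝ} {f' α : ℝ} {x : E} (hx : x ≠ 0)
    (hf : HasDerivAt f f' (‖x‖ ^ α)) :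
    HasGradientAt (fun y : E => f (‖y‖ ^ α)) ((f' * α * ‖x‖ ^ (α - 2)) • x) x := by
  rw [hasGradientAt_iff_hasFDerivAt]
  refine (hf.comp_hasFDerivAt x (hasFDerivAt_norm_rpow_of_ne_zero α hx)).congr_fderiv ?_
  ext v
  simp only [smul_apply, coe_innerSL_apply, smul_eq_mul,
    map_smul, InnerProductSpace.toDual_apply_apply]
  ring

theorem norm_gradient_comp_norm_rpow {f : ℝ → ℝ} {f' α : ℝ} {x : E} (hx : x ≠ 0)
    (hf : HasDerivAt f f' (‖x‖ ^ α)) :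
    ‖gradient (fun y : E => f (‖y‖ ^ α)) x‖ = |f'| * |α| * ‖x‖ ^ (α - 1) := by
  have hx' : 0 < ‖x‖ := norm_pos_iff.mpr hx
  rw [(hasGradientAt_comp_norm_rpow hx hf).gradient, norm_smul, Real.norm_eq_abs, abs_mul,
    abs_mul, abs_of_pos (Real.rpow_pos_of_pos hx' _), mul_assoc, ← Real.rpow_add_one hx'.ne']
  ring_nf

theorem norm_gradient_comp_of_radial {ψ : E → ℝ} (hψ : ∀ y y' : E, ‖y‖ = ‖y'‖ → ψ y = ψ y')
    {g : E → E} {α : ℝ} (hg : ∀ y, ‖g y‖ = ‖y‖ ^ α) {e : E} (he : ‖e‖ = 1) {x : E}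
    (hx : x ≠ 0) (hd : DifferentiableAt ℝ ψ (‖x‖ ^ α • e)) :
    ‖gradient (ψ ∘ g) x‖ = |fderiv ℝ ψ (‖x‖ ^ α • e) e| * |α| * ‖x‖ ^ (α - 1) := by
  have hprofile :
      HasDerivAt (fun s : ℝ => ψ (s • e)) (fderiv ℝ ψ (‖x‖ ^ α • e) e) (‖x‖ ^ α) := by
    have h : HasDerivAt (fun s : ℝ => ψ (s • e)) (fderiv ℝ ψ (‖x‖ ^ α • e) ((1 : ℝ) • e))
        (‖x‖ ^ α) := hd.hasFDerivAt.comp_hasDerivAt _ ((hasDerivAt_id (‖x‖ ^ α)).smul_const e)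
    rwa [one_smul] at h
  have hcomp : ψ ∘ g = fun y => ψ (‖y‖ ^ α • e) := by
    funext y
    apply hψ
    rw [hg, norm_smul, he, mul_one, Real.norm_of_nonneg (by positivity)]
  rw [hcomp]
  exact norm_gradient_comp_norm_rpow hx hprofile

end RadialCalculus

theorem norm_Tk_s17 {β : ℝ} (hβ : 0 < β) (y : E2) : ‖Tk β y‖ = ‖y‖ ^ β := by
  rcases eq_or_ne y 0 with rfl | hy
  · simp [Tk, Real.zero_rpow hβ.ne']
  · rw [Tk, norm_smul, Real.norm_of_nonneg (by positivity),
      ← Real.rpow_add_one (norm_ne_zero_iff.mpr hy), sub_add_cancel]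

theorem Tk_eq_rpow_smul_normalize {β : ℝ} {x : E2} (hx : x ≠ 0) :
    Tk β x = ‖x‖ ^ β • NormedSpace.normalize x := by
  rw [Tk, NormedSpace.normalize, smul_smul, ← Real.rpow_neg_one,
    ← Real.rpow_add (norm_pos_iff.mpr hx), sub_eq_add_neg]

theorem Tk_Tk {α : ℝ} (hα : 0 < α) (β : ℝ) (y : E2) : Tk β (Tk α y) = Tk (α * β) y := by
  rcases eq_or_ne y 0 with rfl | hy
  · simp [Tk]
  · have hy' : 0 < ‖y‖ := norm_pos_iff.mpr hy
    rw [Tk, norm_Tk_s17 hα, Tk, smul_smul, ← Real.rpow_mul hy'.le, ← Real.rpow_add hy', Tk]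
    ring_nf

theorem Tk_one (y : E2) : Tk 1 y = y := by simp [Tk]

theorem leftInverse_Tk_one_div {κ : ℝ} (hκ : 0 < κ) :
    Function.LeftInverse (Tk (1 / κ)) (Tk κ) := fun y => by
  rw [Tk_Tk hκ, mul_one_div_cancel hκ.ne', Tk_one]

theorem rightInverse_Tk_one_div {κ : ℝ} (hκ : 0 < κ) :
    Function.RightInverse (Tk (1 / κ)) (Tk κ) := fun y => by
  rw [Tk_Tk (one_div_pos.mpr hκ), one_div_mul_cancel hκ.ne', Tk_one]

theorem Tk_preimage_zero {β : ℝ} (hβ : 0 < β) : Tk β ⁻¹' {0} = {0} := by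
  ext y
  simp [← norm_eq_zero (a := Tk β y), norm_Tk_s17 hβ, Real.rpow_eq_zero (norm_nonneg y) hβ.ne']

theorem hasFDerivAt_Tk (β : ℝ) {x : E2} (hx : x ≠ 0) :
    HasFDerivAt (Tk β) (‖x‖ ^ (β - 1) • ContinuousLinearMap.id ℝ E2 +
      (((β - 1) * ‖x‖ ^ (β - 3)) • innerSL ℝ x).smulRight x) x := by
  have h := (hasFDerivAt_norm_rpow_of_ne_zero (β - 1) hx).smul (hasFDerivAt_id x)
  rw [show β - 1 - 2 = β - 3 by ring] at h
  exact h

theorem det_smul_id_add_smulRight_innerSL (p q : ℝ) (x : E2) :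
    (p • ContinuousLinearMap.id ℝ E2 + (q • innerSL ℝ x).smulRight x).det =
      p * (p + q * ‖x‖ ^ 2) := by
  rw [ContinuousLinearMap.det,
    ← LinearMap.det_toMatrix (EuclideanSpace.basisFun (Fin 2) ℝ).toBasis, Matrix.det_fin_two,
    EuclideanSpace.real_norm_sq_eq, Fin.sum_univ_two]
  simp [LinearMap.toMatrix_apply, EuclideanSpace.inner_single_right]
  ring

theorem det_fderiv_Tk (β : ℝ) {x : E2} (hx : x ≠ 0) :
    (fderiv ℝ (Tk β) x).det = β * (‖x‖ ^ (β - 1)) ^ 2 := by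
  have hx' : 0 < ‖x‖ := norm_pos_iff.mpr hx
  have hpow : ‖x‖ ^ (β - 3) * ‖x‖ ^ 2 = ‖x‖ ^ (β - 1) := by
    rw [← Real.rpow_natCast, ← Real.rpow_add hx']
    congr 1
    ring
  rw [(hasFDerivAt_Tk β hx).fderiv, det_smul_id_add_smulRight_innerSL, mul_assoc, hpow]
  ring

theorem isOpen_Tk_preimage_sdiff_zero {Ω : Set E2} (hΩ : IsOpen Ω) (β : ℝ) :
    IsOpen (Tk β ⁻¹' Ω \ {0}) := by
  have hcont : ContinuousOn (Tk β) {0}ᶜ := fun x hx =>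
    (hasFDerivAt_Tk β hx).continuousAt.continuousWithinAt
  simpa only [Set.sdiff_eq, Set.inter_comm] using
    hcont.isOpen_inter_preimage isOpen_compl_singleton hΩ

theorem image_Tk_one_div_sdiff_zero {κ : ℝ} (hκ : 0 < κ) (Ω : Set E2) :
    Tk (1 / κ) '' (Ω \ {0}) = Tk κ ⁻¹' Ω \ {0} := by
  rw [Set.image_eq_preimage_of_inverse (rightInverse_Tk_one_div hκ) (leftInverse_Tk_one_div hκ),
    Set.preimage_sdiff, Tk_preimage_zero hκ]

theorem abs_det_fderiv_Tk_mul_norm_gradient_sq {κ : ℝ} (hκ : 0 < κ) {ψ : E2 → ℝ}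
    (hψ : ∀ y y' : E2, ‖y‖ = ‖y'‖ → ψ y = ψ y') {x : E2} (hx : x ≠ 0)
    (hd : DifferentiableAt ℝ ψ (Tk (1 / κ) x)) :
    |(fderiv ℝ (Tk (1 / κ)) x).det| * ‖gradient ψ (Tk (1 / κ) x)‖ ^ 2 =
      κ * ‖gradient (ψ ∘ Tk (1 / κ)) x‖ ^ 2 := by
  set β := 1 / κ with hβ_def
  have hβ : 0 < β := one_div_pos.mpr hκ
  -- The profile of `ψ` is taken along `x / ‖x‖`, so that it is differentiated at `T x` itself,
  -- the only point near which `ψ` is known to be differentiable.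
  set e := NormedSpace.normalize x
  have he : ‖e‖ = 1 := NormedSpace.norm_normalize_eq_one_iff.mpr hx
  have hTx : Tk β x = ‖x‖ ^ β • e := Tk_eq_rpow_smul_normalize hx
  have hy : Tk β x ≠ 0 := by
    rw [← norm_pos_iff, norm_Tk_s17 hβ]
    exact Real.rpow_pos_of_pos (norm_pos_iff.mpr hx) β
  have hgrad_ψ : ‖gradient ψ (Tk β x)‖ = |fderiv ℝ ψ (Tk β x) e| := by
    have h := norm_gradient_comp_of_radial hψ (g := id) (α := 1)
      (fun y => (Real.rpow_one _).symm) he hy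
      (by rwa [Real.rpow_one, norm_Tk_s17 hβ, ← hTx])
    simpa [norm_Tk_s17 hβ, ← hTx] using h
  have hgrad_φ : ‖gradient (ψ ∘ Tk β) x‖ = |fderiv ℝ ψ (Tk β x) e| * |β| * ‖x‖ ^ (β - 1) := by
    rw [hTx]
    exact norm_gradient_comp_of_radial hψ (norm_Tk_s17 hβ) he hx (by rwa [← hTx])
  rw [det_fderiv_Tk β hx, hgrad_ψ, hgrad_φ, abs_of_nonneg (by positivity), abs_of_pos hβ, hβ_def]
  field_simp

theorem lintegral_norm_gradient_sq_comp_Tk {Ω : Set E2} (hΩ : IsOpen Ω) {κ : ℝ} (hκ : 0 < κ)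
    {ψ : E2 → ℝ} (hψ_rad : ∀ y y' : E2, ‖y‖ = ‖y'‖ → ψ y = ψ y')
    (hψ : DifferentiableOn ℝ ψ (Tk κ ⁻¹' Ω \ {0})) :
    ENNReal.ofReal κ * ∫⁻ x in Ω, ENNReal.ofReal (‖gradient (ψ ∘ Tk (1 / κ)) x‖ ^ 2) =
      ∫⁻ y in Tk κ ⁻¹' Ω, ENNReal.ofReal (‖gradient ψ y‖ ^ 2) := by
  have hmeas : MeasurableSet (Ω \ {0}) := hΩ.measurableSet.diff (measurableSet_singleton 0)
  have hdiff : ∀ x ∈ Ω \ {0}, DifferentiableAt ℝ ψ (Tk (1 / κ) x) := fun x hx =>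
    have hmem : Tk (1 / κ) x ∈ Tk κ ⁻¹' Ω \ {0} :=
      image_Tk_one_div_sdiff_zero hκ Ω ▸ Set.mem_image_of_mem _ hx
    hψ.differentiableAt ((isOpen_Tk_preimage_sdiff_zero hΩ κ).mem_nhds hmem)
  have hcov := lintegral_image_eq_lintegral_abs_det_fderiv_mul volume hmeas
    (fun x hx => (hasFDerivAt_Tk (1 / κ) hx.2).differentiableAt.hasFDerivAt.hasFDerivWithinAt)
    (rightInverse_Tk_one_div hκ).injective.injOn (fun y => ENNReal.ofReal (‖gradient ψ y‖ ^ 2))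
  rw [image_Tk_one_div_sdiff_zero hκ, setLIntegral_sdiff_singleton] at hcov
  rw [hcov, ← setLIntegral_sdiff_singleton Ω 0, ← lintegral_const_mul' _ _ ENNReal.ofReal_ne_top]
  refine setLIntegral_congr_fun hmeas fun x hx => ?_
  rw [← ENNReal.ofReal_mul (abs_nonneg _), ← ENNReal.ofReal_mul hκ.le,
    abs_det_fderiv_Tk_mul_norm_gradient_sq hκ hψ_rad hx.2 (hdiff x hx)]

theorem Tk_gradient_integral_identity_radial
    (Ω : Set E2)
    (hΩ : (∃ R > 0, Ω = Metric.ball 0 R) ∨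
      (∃ a b : ℝ, 0 < a ∧ a < b ∧ Ω = {x : E2 | a < ‖x‖ ∧ ‖x‖ < b}))
    (κ : ℝ) (hκ : 0 < κ)
    (ψ : E2 → ℝ) (hψ_rad : ∀ y y' : E2, ‖y‖ = ‖y'‖ → ψ y = ψ y')
    (hψ : ContDiffOn ℝ 1 ψ ((Tk κ ⁻¹' Ω) \ {0}))
    (φ : E2 → ℝ) (hφ : φ = ψ ∘ Tk (1 / κ)) :
    ENNReal.ofReal κ * (∫⁻ x in Ω, ENNReal.ofReal (‖gradient φ x‖ ^ 2)) =
      ∫⁻ y in Tk κ ⁻¹' Ω, ENNReal.ofReal (‖gradient ψ y‖ ^ 2) := by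
  have hΩ_open : IsOpen Ω := by
    rcases hΩ with ⟨R, -, rfl⟩ | ⟨a, b, -, -, rfl⟩
    · exact Metric.isOpen_ball
    · exact (isOpen_lt continuous_const continuous_norm).inter
        (isOpen_lt continuous_norm continuous_const)
  subst hφ
  exact lintegral_norm_gradient_sq_comp_Tk hΩ_open hκ hψ_rad (hψ.differentiableOn one_ne_zero)
end

section
/- Let α > 0, set κ = 2/(α+2), let f : ℝ → ℝ be continuous, let 0 ≤ a < b, and let U : ℝ → ℝ be twice differentiable on (a, b) and satisfy the radial Hénon ODE U''(r) + U'(r)/r + r^α f(U(r)) = 0 for all r ∈ (a, b). Then the function V defined by V(s) = U(s^κ) is twice differentiable on (a^{1/κ}, b^{1/κ}) and satisfies V''(s) + V'(s)/s + κ² f(V(s)) = 0 for all s ∈ (a^{1/κ}, b^{1/κ}). -/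
/-!
With `r = s ^ κ` one has `s V'(s) = κ r U'(r)`, so the radial Laplacians are related by
`V'' + V'/s = κ² s^(2κ-2) (U'' + U'/r)`. The Hénon weight `r^α = s^(κα)` is absorbed exactly
when `2κ - 2 + κα = 0`, i.e. `κ = 2/(α+2)`, leaving the constant coefficient `κ²`.
-/

open Set Filter Topology Real

section

variable {U : ℝ → ℝ} {κ s : ℝ}

theorem mem_Ioo_rpow_of_mem_Ioo_rpow_one_div {a b : ℝ} (ha : 0 ≤ a) (hb : 0 ≤ b) (hκ : 0 < κ)
    (hs : s ∈ Ioo (a ^ (1 / κ)) (b ^ (1 / κ))) : 0 < s ∧ s ^ κ ∈ Ioo a b := by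
  rw [one_div] at hs
  have hs₀ : 0 < s := (rpow_nonneg ha _).trans_lt hs.1
  exact ⟨hs₀, (rpow_inv_lt_iff_of_pos ha hs₀.le hκ).1 hs.1,
    (lt_rpow_inv_iff_of_pos hs₀.le hb hκ).1 hs.2⟩

theorem HasDerivAt.comp_rpow_const {u' : ℝ} (hs : 0 < s) (hU : HasDerivAt U u' (s ^ κ)) :
    HasDerivAt (fun t => U (t ^ κ)) (u' * (κ * s ^ (κ - 1))) s :=
  hU.comp s (hasDerivAt_rpow_const (Or.inl hs.ne'))

theorem deriv_comp_rpow_const_eventuallyEq (hs : 0 < s)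
    (hU : ∀ᶠ r in 𝓝 (s ^ κ), DifferentiableAt ℝ U r) :
    deriv (fun t => U (t ^ κ)) =ᶠ[𝓝 s] fun t => deriv U (t ^ κ) * (κ * t ^ (κ - 1)) := by
  have hU' : ∀ᶠ t in 𝓝 s, DifferentiableAt ℝ U (t ^ κ) :=
    (continuousAt_rpow_const s κ (Or.inl hs.ne')).eventually hU
  filter_upwards [hU', eventually_gt_nhds hs] with t htU ht
  exact (htU.hasDerivAt.comp_rpow_const ht).deriv

theorem hasDerivAt_deriv_comp_rpow_const (hs : 0 < s)
    (hU : ∀ᶠ r in 𝓝 (s ^ κ), DifferentiableAt ℝ U r)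
    (hU' : DifferentiableAt ℝ (deriv U) (s ^ κ)) :
    HasDerivAt (deriv fun t => U (t ^ κ))
      (deriv (deriv U) (s ^ κ) * (κ * s ^ (κ - 1)) * (κ * s ^ (κ - 1))
        + deriv U (s ^ κ) * (κ * ((κ - 1) * s ^ (κ - 1 - 1)))) s := by
  have hfactor : HasDerivAt (fun t => κ * t ^ (κ - 1)) (κ * ((κ - 1) * s ^ (κ - 1 - 1))) s :=
    (hasDerivAt_rpow_const (Or.inl hs.ne')).const_mul κ
  exact ((hU'.hasDerivAt.comp_rpow_const hs).mul hfactor).congr_of_eventuallyEq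
    (deriv_comp_rpow_const_eventuallyEq hs hU)

theorem radial_laplacian_comp_rpow_const (hs : 0 < s)
    (hU : ∀ᶠ r in 𝓝 (s ^ κ), DifferentiableAt ℝ U r)
    (hU' : DifferentiableAt ℝ (deriv U) (s ^ κ)) :
    deriv (deriv fun t => U (t ^ κ)) s + deriv (fun t => U (t ^ κ)) s / s
      = κ ^ 2 * s ^ (2 * κ - 2) * (deriv (deriv U) (s ^ κ) + deriv U (s ^ κ) / s ^ κ) := by
  rw [(hasDerivAt_deriv_comp_rpow_const hs hU hU').deriv,
    (deriv_comp_rpow_const_eventuallyEq hs hU).eq_of_nhds]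
  have hsκ : s ^ κ ≠ 0 := (rpow_pos_of_pos hs κ).ne'
  have h₁ : s ^ (κ - 1) = s ^ κ / s := by rw [rpow_sub hs, rpow_one]
  have h₂ : s ^ (κ - 1 - 1) = s ^ κ / s ^ 2 := by rw [rpow_sub hs, h₁, rpow_one]; ring
  have h₃ : s ^ (2 * κ - 2) = (s ^ κ) ^ 2 / s ^ 2 := by
    rw [rpow_sub hs, mul_comm, rpow_mul hs.le, rpow_two, rpow_two]
  rw [h₁, h₂, h₃]
  field_simp
  ring

end

theorem henon_ode_change_of_variable_general
    (α : ℝ) (hα : 0 < α) (κ : ℝ) (hκ : κ = 2 / (α + 2))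
    (f : ℝ → ℝ)
    (a b : ℝ) (hab : 0 ≤ a ∧ a < b)
    (U : ℝ → ℝ)
    (hU₁ : DifferentiableOn ℝ U (Ioo a b))
    (hU₂ : DifferentiableOn ℝ (deriv U) (Ioo a b))
    (hU_eq : ∀ r ∈ Ioo a b,
      deriv (deriv U) r + deriv U r / r + r ^ α * f (U r) = 0)
    (V : ℝ → ℝ) (hV : V = fun s => U (s ^ κ)) :
    DifferentiableOn ℝ V (Ioo (a ^ (1 / κ)) (b ^ (1 / κ))) ∧
    DifferentiableOn ℝ (deriv V) (Ioo (a ^ (1 / κ)) (b ^ (1 / κ))) ∧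
    ∀ s ∈ Ioo (a ^ (1 / κ)) (b ^ (1 / κ)),
      deriv (deriv V) s + deriv V s / s + κ ^ 2 * f (V s) = 0 := by
  subst hV
  have hκ₀ : 0 < κ := by rw [hκ]; positivity
  have hweight : 2 * κ - 2 + κ * α = 0 := by rw [hκ]; field_simp; ring
  have hsmooth : ∀ s ∈ Ioo (a ^ (1 / κ)) (b ^ (1 / κ)), 0 < s ∧ s ^ κ ∈ Ioo a b ∧
      (∀ᶠ r in 𝓝 (s ^ κ), DifferentiableAt ℝ U r) ∧ DifferentiableAt ℝ (deriv U) (s ^ κ) := by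
    intro s hs
    obtain ⟨hs₀, hr⟩ := mem_Ioo_rpow_of_mem_Ioo_rpow_one_div hab.1 (hab.1.trans hab.2.le) hκ₀ hs
    exact ⟨hs₀, hr, hU₁.eventually_differentiableAt (isOpen_Ioo.mem_nhds hr),
      hU₂.differentiableAt (isOpen_Ioo.mem_nhds hr)⟩
  refine ⟨fun s hs => ?_, fun s hs => ?_, fun s hs => ?_⟩ <;>
    obtain ⟨hs₀, hr, hU, hU'⟩ := hsmooth s hs
  · exact (hU.self_of_nhds.hasDerivAt.comp_rpow_const hs₀).differentiableAt
      |>.differentiableWithinAt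
  · exact (hasDerivAt_deriv_comp_rpow_const hs₀ hU hU').differentiableAt.differentiableWithinAt
  · have hU_radial : deriv (deriv U) (s ^ κ) + deriv U (s ^ κ) / s ^ κ
        = -((s ^ κ) ^ α * f (U (s ^ κ))) := eq_neg_of_add_eq_zero_left (hU_eq _ hr)
    have hweight_s : s ^ (2 * κ - 2) * (s ^ κ) ^ α = 1 := by
      rw [← rpow_mul hs₀.le, ← rpow_add hs₀, hweight, rpow_zero]
    rw [radial_laplacian_comp_rpow_const hs₀ hU hU', hU_radial]
    linear_combination -κ ^ 2 * f (U (s ^ κ)) * hweight_s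

theorem henon_ode_change_of_variable
    (α : ℝ) (hα : 0 < α) (κ : ℝ) (hκ : κ = 2 / (α + 2))
    (f : ℝ → ℝ) (hf : Continuous f)
    (a b : ℝ) (hab : 0 ≤ a ∧ a < b)
    (U : ℝ → ℝ)
    (hU₁ : DifferentiableOn ℝ U (Ioo a b))
    (hU₂ : DifferentiableOn ℝ (deriv U) (Ioo a b))
    (hU_eq : ∀ r ∈ Ioo a b,
      deriv (deriv U) r + deriv U r / r + r ^ α * f (U r) = 0)
    (V : ℝ → ℝ) (hV : V = fun s => U (s ^ κ)) :
    DifferentiableOn ℝ V (Ioo (a ^ (1 / κ)) (b ^ (1 / κ))) ∧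
    DifferentiableOn ℝ (deriv V) (Ioo (a ^ (1 / κ)) (b ^ (1 / κ))) ∧
    ∀ s ∈ Ioo (a ^ (1 / κ)) (b ^ (1 / κ)),
      deriv (deriv V) s + deriv V s / s + κ ^ 2 * f (V s) = 0 :=
  henon_ode_change_of_variable_general α hα κ hκ f a b hab U hU₁ hU₂ hU_eq V hV
end
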